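/- Let λ = (λ_1 ≤ … ≤ λ_d) ∈ ℝ_{≥0}^d be non-decreasing and a = (a_1,…,a_k) ∈ ℝ_{>0}^k with k ≥ d, assume (1/d)(Σ_{i=1}^k a_i + Σ_{i=1}^d λ_i) < λ_d, and let s ∈ {1,…,d−1} be the unique index with λ_s ≤ Q_s < λ_{s+1}. Suppose ρ ∈ ℝ^d has the form ρ = (c·1_r, λ_{r+1},…,λ_d) for some r ∈ {1,…,d} and c > 0 (the case r = d meaning ρ = c·1_d), ρ is non-decreasing, λ_i ≤ ρ_i for every i ∈ {1,…,d}, and Σ_{i=1}^d ρ_i = Σ_{i=1}^d λ_i + Σ_{i=1}^k a_i. Then ρ = (Q_s·1_s, λ_{s+1},…,λ_d). -/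

import Mathlib

open Finset
open scoped ComplexOrder

noncomputable def sortAsc {m : ℕ} (x : Fin m → ℝ) : Fin m → ℝ :=
  x ∘ Tuple.sort x

noncomputable def sortDesc {m : ℕ} (x : Fin m → ℝ) : Fin m → ℝ :=
  fun i => (x ∘ Tuple.sort x) i.rev

noncomputable def pad {k : ℕ} (x : Fin k → ℝ) (m : ℕ) : Fin m → ℝ :=
  fun i => if h : (i : ℕ) < k then x ⟨i, h⟩ else 0

/-- `MajorizedBy x y` means `x ≺ y`. -/
def MajorizedBy {m : ℕ} (x y : Fin m → ℝ) : Prop :=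
  (∀ j : Fin m, ∑ i ∈ Finset.Iic j, sortDesc x i ≤ ∑ i ∈ Finset.Iic j, sortDesc y i) ∧
    ∑ i, x i = ∑ i, y i

/-- Majorization of vectors of possibly different lengths, padding with zeros. -/
def MajorizedByPad {k m : ℕ} (x : Fin k → ℝ) (y : Fin m → ℝ) : Prop :=
  MajorizedBy (pad x (max k m)) (pad y (max k m))

/-- The frame operator `S_F = ∑ f_i f_i^*` of a finite sequence of vectors in `ℂ^d`. -/
noncomputable def frameOp {d n : ℕ} (F : Fin n → Fin d → ℂ) : Matrix (Fin d) (Fin d) ℂ :=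
  ∑ l, Matrix.vecMulVec (F l) (star (F l))

/-- The squared norm `‖g‖²` of a vector in `ℂ^d`. -/
noncomputable def normSqVec {d : ℕ} (g : Fin d → ℂ) : ℝ :=
  ∑ i, Complex.normSq (g i)

open scoped Classical in
/-- Eigenvalues of a (Hermitian) matrix arranged in decreasing order. -/
noncomputable def eigsDesc {d : ℕ} (S : Matrix (Fin d) (Fin d) ℂ) : Fin d → ℝ :=
  if h : S.IsHermitian then sortDesc h.eigenvalues else 0

open scoped Classical in
/-- Eigenvalues of a (Hermitian) matrix arranged in increasing order. -/
noncomputable def eigsAsc {d : ℕ} (S : Matrix (Fin d) (Fin d) ℂ) : Fin d → ℝ :=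
  if h : S.IsHermitian then sortAsc h.eigenvalues else 0

/-- `Γ_d(a)`: non-increasing nonnegative vectors in `ℝ^d` majorizing `a`. -/
def Gamma {k : ℕ} (d : ℕ) (a : Fin k → ℝ) : Set (Fin d → ℝ) :=
  {μ | Antitone μ ∧ (∀ i, 0 ≤ μ i) ∧ MajorizedByPad a μ}

/-- The convex potential `P_f = tr f(S) = ∑ f(λ_i(S))`. -/
noncomputable def potential {d : ℕ} (f : ℝ → ℝ) (S : Matrix (Fin d) (Fin d) ℂ) : ℝ :=
  ∑ i, f (eigsDesc S i)

/-- Final averages `Q_{j,r} = (1/(r-j)) (∑_{i=j+1}^k a_i + ∑_{i=j+1}^r λ_i)` (1-based). -/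
noncomputable def finalAvg {d k : ℕ} (lam : Fin d → ℝ) (a : Fin k → ℝ) (j r : ℕ) : ℝ :=
  ((∑ i : Fin k, if j ≤ (i : ℕ) then a i else 0) +
      (∑ i : Fin d, if j ≤ (i : ℕ) ∧ (i : ℕ) < r then lam i else 0)) / ((r : ℝ) - (j : ℝ))

/-- Initial averages: `initAvg lam a lo hi = P_{lo+1,hi}` (1-based), i.e. the average of
`h_i = λ_i + a_i` over the (0-based) index window `[lo, hi)`. -/
noncomputable def initAvg {d k : ℕ} (lam : Fin d → ℝ) (a : Fin k → ℝ) (lo hi : ℕ) : ℝ :=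
  ((∑ i : Fin d, if lo ≤ (i : ℕ) ∧ (i : ℕ) < hi then lam i else 0) +
      (∑ i : Fin k, if lo ≤ (i : ℕ) ∧ (i : ℕ) < hi then a i else 0)) / ((hi : ℝ) - (lo : ℝ))

/-- 1-based access to a vector indexed by `Fin d`. -/
noncomputable def get1 {d : ℕ} (lam : Fin d → ℝ) (i : ℕ) : ℝ :=
  if h : i - 1 < d then lam ⟨i - 1, h⟩ else 0

/-- The index `s` is feasible for the pair `(λ, a)`: the unique vector
`ν_s = (c·1_{r-s}, λ_{r+1},…,λ_d)` determined by the truncated data satisfies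
`a^s ≺ ν_s - λ^s`. -/
def FeasibleIdx {d k : ℕ} (lam : Fin d → ℝ) (a : Fin k → ℝ) (s : ℕ) : Prop :=
  ∃ r : ℕ, ∃ c : ℝ, s < r ∧ r ≤ d ∧ 0 < c ∧
    (∀ i : Fin d, s ≤ (i : ℕ) → (i : ℕ) < r → lam i ≤ c) ∧
    (∀ hrd : r < d, c ≤ lam ⟨r, hrd⟩) ∧
    ((r : ℝ) - (s : ℝ)) * c =
      (∑ i : Fin d, if s ≤ (i : ℕ) ∧ (i : ℕ) < r then lam i else 0) +
        (∑ i : Fin k, if s ≤ (i : ℕ) then a i else 0) ∧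
    MajorizedByPad (fun i : Fin (k - s) => a ⟨s + (i : ℕ), by have := i.isLt; omega⟩)
      (fun i : Fin (d - s) =>
        if s + (i : ℕ) < r then c - lam ⟨s + (i : ℕ), by have := i.isLt; omega⟩ else 0)

/-!
Both `ρ` and the claimed vector `(Q_s·1_s, λ_{s+1},…,λ_d)` are obtained from `λ` by raising an
initial block to a level that lies between the last raised and the first unraised entry of `λ`.
Any two vectors of this kind are comparable coordinatewise, so if they have the same sum they
coincide. The hypotheses on `ρ` and on `s` say precisely that both levels have this property,
and the trace condition together with the definition of `Q_s` gives the equality of sums.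
-/

theorem eq_of_le_of_sum_eq {ι M : Type*} [Fintype ι] [AddCommMonoid M] [PartialOrder M]
    [IsOrderedCancelAddMonoid M] {x y : ι → M} (hle : x ≤ y) (hsum : ∑ i, x i = ∑ i, y i) :
    x = y :=
  funext fun i => (sum_eq_sum_iff_of_le fun i _ => hle i).1 hsum i (mem_univ i)

section WaterFill

variable {d : ℕ} {lam : Fin d → ℝ}

def waterFill (lam : Fin d → ℝ) (r : ℕ) (c : ℝ) : Fin d → ℝ :=
  fun i => if (i : ℕ) < r then c else lam i

structure IsWaterLevel (lam : Fin d → ℝ) (r : ℕ) (c : ℝ) : Prop where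
  le_level : ∀ i : Fin d, (i : ℕ) < r → lam i ≤ c
  level_le : ∀ i : Fin d, r ≤ (i : ℕ) → c ≤ lam i

theorem waterFill_le_waterFill {r r' : ℕ} {c c' : ℝ} (hr : r ≤ r') (hc : c ≤ c')
    (hc' : ∀ i : Fin d, (i : ℕ) < r' → lam i ≤ c') :
    waterFill lam r c ≤ waterFill lam r' c' := by
  intro i
  simp only [waterFill]
  split_ifs with hi hi' hi'
  · exact hc
  · omega
  · exact hc' i hi'
  · exact le_rfl

theorem sum_waterFill (r : ℕ) (c : ℝ) :
    ∑ i, waterFill lam r c i = ∑ i, lam i + ∑ i : Fin d, if (i : ℕ) < r then c - lam i else 0 := by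
  rw [← sum_add_distrib]
  refine sum_congr rfl fun i _ => ?_
  simp only [waterFill]
  split_ifs <;> ring

theorem get1_succ (i : Fin d) : get1 lam ((i : ℕ) + 1) = lam i := by
  simp [get1]

namespace IsWaterLevel

theorem level_le_of_lt {r r' : ℕ} {c c' : ℝ} (h : IsWaterLevel lam r c)
    (h' : IsWaterLevel lam r' c') (hrr : r < r') (hr' : r' ≤ d) : c ≤ c' :=
  (h.level_le ⟨r, by omega⟩ le_rfl).trans (h'.le_level ⟨r, by omega⟩ hrr)

theorem waterFill_le_or_le {r r' : ℕ} {c c' : ℝ} (h : IsWaterLevel lam r c)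
    (h' : IsWaterLevel lam r' c') (hr : r ≤ d) (hr' : r' ≤ d) :
    waterFill lam r c ≤ waterFill lam r' c' ∨ waterFill lam r' c' ≤ waterFill lam r c := by
  rcases lt_trichotomy r r' with hrr | rfl | hrr
  · exact .inl (waterFill_le_waterFill hrr.le (h.level_le_of_lt h' hrr hr') h'.le_level)
  · rcases le_total c c' with hcc | hcc
    · exact .inl (waterFill_le_waterFill le_rfl hcc h'.le_level)
    · exact .inr (waterFill_le_waterFill le_rfl hcc h.le_level)
  · exact .inr (waterFill_le_waterFill hrr.le (h'.level_le_of_lt h hrr hr) h.le_level)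

theorem waterFill_eq {r r' : ℕ} {c c' : ℝ} (h : IsWaterLevel lam r c)
    (h' : IsWaterLevel lam r' c') (hr : r ≤ d) (hr' : r' ≤ d)
    (hsum : ∑ i, waterFill lam r c i = ∑ i, waterFill lam r' c' i) :
    waterFill lam r c = waterFill lam r' c' := by
  rcases h.waterFill_le_or_le h' hr hr' with hle | hle
  · exact eq_of_le_of_sum_eq hle hsum
  · exact (eq_of_le_of_sum_eq hle hsum.symm).symm

theorem of_monotone_waterFill {r : ℕ} {c : ℝ} (hr1 : 1 ≤ r) (hrd : r ≤ d)
    (hmono : Monotone (waterFill lam r c)) (hle : lam ≤ waterFill lam r c) :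
    IsWaterLevel lam r c where
  le_level i hi := by simpa [waterFill, hi] using hle i
  level_le i hi := by
    have hri : (⟨r - 1, by omega⟩ : Fin d) ≤ i := Fin.le_iff_val_le_val.2 (by simp only; omega)
    simpa [waterFill, show r - 1 < r by omega, show ¬(i : ℕ) < r by omega] using hmono hri

theorem of_get1 {s : ℕ} {c : ℝ} (hlam : Monotone lam) (hs1 : 1 ≤ s) (hsd : s < d)
    (hsl : get1 lam s ≤ c) (hsu : c ≤ get1 lam (s + 1)) : IsWaterLevel lam s c where
  le_level i hi :=
    calc lam i ≤ lam ⟨s - 1, by omega⟩ := hlam (Fin.le_iff_val_le_val.2 (by simp only; omega))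
      _ = get1 lam s := by simp [get1, show s - 1 < d by omega]
      _ ≤ c := hsl
  level_le i hi :=
    calc c ≤ get1 lam (s + 1) := hsu
      _ = lam ⟨s, hsd⟩ := get1_succ ⟨s, hsd⟩
      _ ≤ lam i := hlam (Fin.le_iff_val_le_val.2 hi)

end IsWaterLevel

end WaterFill

theorem finalAvg_zero_mul {d k : ℕ} (lam : Fin d → ℝ) (a : Fin k → ℝ) {s : ℕ} (hs : s ≠ 0) :
    finalAvg lam a 0 s * s = ∑ i, a i + ∑ i : Fin d, if (i : ℕ) < s then lam i else 0 := by
  simp [finalAvg, hs]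

theorem sum_waterFill_finalAvg {d k : ℕ} (lam : Fin d → ℝ) (a : Fin k → ℝ) {s : ℕ}
    (hs : s ≠ 0) (hsd : s ≤ d) :
    ∑ i, waterFill lam s (finalAvg lam a 0 s) i = ∑ i, lam i + ∑ i, a i := by
  have hcard : #{i : Fin d | (i : ℕ) < s} = s := by
    rw [Fin.card_filter_val_lt, min_eq_right hsd]
  rw [sum_waterFill, ← sum_filter, sum_sub_distrib, sum_const, hcard, nsmul_eq_mul, sum_filter,
    mul_comm, finalAvg_zero_mul lam a hs]
  ring

theorem stmt_9_general {d k : ℕ}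
    (lam : Fin d → ℝ) (hlam : Monotone lam)
    (a : Fin k → ℝ)
    (s : ℕ) (hs1 : 1 ≤ s) (hs2 : s ≤ d - 1)
    (hsl : get1 lam s ≤ finalAvg lam a 0 s) (hsu : finalAvg lam a 0 s < get1 lam (s + 1))
    (ρ : Fin d → ℝ) (r : ℕ) (c : ℝ) (hr1 : 1 ≤ r) (hrd : r ≤ d)
    (hform : ∀ i : Fin d, ρ i = if (i : ℕ) < r then c else lam i)
    (hρmono : Monotone ρ) (hle : ∀ i, lam i ≤ ρ i)
    (htr : ∑ i, ρ i = ∑ i, lam i + ∑ i, a i) :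
    ∀ i : Fin d, ρ i = if (i : ℕ) < s then finalAvg lam a 0 s else lam i := by
  have hsd : s < d := by omega
  obtain rfl : ρ = waterFill lam r c := funext hform
  have hQ : IsWaterLevel lam s (finalAvg lam a 0 s) :=
    IsWaterLevel.of_get1 hlam hs1 hsd hsl hsu.le
  have hsum : ∑ i, waterFill lam r c i = ∑ i, waterFill lam s (finalAvg lam a 0 s) i := by
    rw [htr, sum_waterFill_finalAvg lam a (by omega) hsd.le]
  have hρ : IsWaterLevel lam r c := .of_monotone_waterFill hr1 hrd hρmono hle
  exact congrFun (hρ.waterFill_eq hQ hrd hsd.le hsum)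

theorem stmt_9 {d k : ℕ} (hd : 0 < d) (hdk : d ≤ k)
    (lam : Fin d → ℝ) (hlam : Monotone lam) (hlam0 : ∀ i, 0 ≤ lam i)
    (a : Fin k → ℝ) (ha : ∀ i, 0 < a i)
    (hmean : finalAvg lam a 0 d < get1 lam d)
    (s : ℕ) (hs1 : 1 ≤ s) (hs2 : s ≤ d - 1)
    (hsl : get1 lam s ≤ finalAvg lam a 0 s) (hsu : finalAvg lam a 0 s < get1 lam (s + 1))
    (ρ : Fin d → ℝ) (r : ℕ) (c : ℝ) (hr1 : 1 ≤ r) (hrd : r ≤ d) (hc : 0 < c)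
    (hform : ∀ i : Fin d, ρ i = if (i : ℕ) < r then c else lam i)
    (hρmono : Monotone ρ) (hle : ∀ i, lam i ≤ ρ i)
    (htr : ∑ i, ρ i = ∑ i, lam i + ∑ i, a i) :
    ∀ i : Fin d, ρ i = if (i : ℕ) < s then finalAvg lam a 0 s else lam i :=
  stmt_9_general lam hlam a s hs1 hs2 hsl hsu ρ r c hr1 hrd hform hρmono hle htr
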